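/- arXiv:1102.0542 — 2 statements merged into one kernel-verified Lean document; each statement's English description precedes it below -/
import Mathlib

section
/- Let i be odd and let R' be the twisted rotation: R'(u)_1 is the opposite letter of u_d, and R'(u)_j = u_{j-1} for 2 ≤ j ≤ d. If a word u of length d satisfies |S(u)| ≤ i, then |S(R'(u))| ≤ i. -/
/-- The switch set of a word `u` of length `d` over the alphabet {x,y}. -/
def sw (d : ℕ) (u : ℕ → Bool) : Finset ℕ :=
  (Finset.Ico 1 d).filter (fun j => u j ≠ u (j + 1))

/-- Twisted rotation: `R'(u)_1` is the opposite of `u_d`, and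
`R'(u)_j = u_{j-1}` for `2 ≤ j ≤ d`. -/
def trot (d : ℕ) (u : ℕ → Bool) : ℕ → Bool :=
  fun n => if n = 1 then !(u d) else u (n - 1)

lemma sw_mono {d e : ℕ} (h : d ≤ e) (u : ℕ → Bool) : sw d u ⊆ sw e u := by
  intro j hj
  simp only [sw, Finset.mem_filter, Finset.mem_Ico] at *
  exact ⟨⟨hj.1.1, lt_of_lt_of_le hj.1.2 h⟩, hj.2⟩

lemma sw_parity (u : ℕ → Bool) : ∀ d : ℕ, 1 ≤ d → (Even (sw d u).card ↔ u 1 = u d) := by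
  intro d
  induction d with
  | zero => omega
  | succ d ih =>
    intro _
    rcases Nat.eq_or_lt_of_le (show 1 ≤ d + 1 from Nat.le_add_left 1 d) with h1 | h1
    · have hd0 : d = 0 := by omega
      subst hd0
      simp [show sw 1 u = ∅ by simp [sw]]
    · have hd : 1 ≤ d := by omega
      have hins : Finset.Ico 1 (d + 1) = insert d (Finset.Ico 1 d) := by
        ext k; simp only [Finset.mem_Ico, Finset.mem_insert]; omega
      have hnot : d ∉ Finset.Ico 1 d := by simp
      have ihd := ih hd
      by_cases hP : u d ≠ u (d + 1)
      · have : sw (d + 1) u = insert d (sw d u) := by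
          simp [sw, hins, Finset.filter_insert, hP]
        rw [this, Finset.card_insert_of_notMem (by simp [sw])]
        rw [Nat.even_add_one, ihd]
        cases hu1 : u 1 <;> cases hud : u d <;> cases hud1 : u (d+1) <;> simp_all
      · have : sw (d + 1) u = sw d u := by
          simp [sw, hins, Finset.filter_insert, hP]
        rw [this, ihd]
        push_neg at hP
        rw [hP]

/-- For odd `i`, if a word has at most `i` switches, so does its
twisted rotation. -/
theorem stmt6 (d i : ℕ) (hd : 1 ≤ d) (hi : Odd i) (u : ℕ → Bool)
    (h : (sw d u).card ≤ i) :
    (sw d (trot d u)).card ≤ i := by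
  set S := (sw (d - 1) u).image (· + 1) with hS
  have hsub : sw d (trot d u) ⊆ insert 1 S := by
    intro j hj
    simp only [sw, Finset.mem_filter, Finset.mem_Ico] at hj
    obtain ⟨⟨hj1, hjd⟩, hjne⟩ := hj
    rcases Nat.eq_or_lt_of_le hj1 with h1 | h1
    · simp [← h1]
    · have hj2 : 2 ≤ j := h1
      have e1 : trot d u j = u (j - 1) := by
        simp only [trot, if_neg (by omega : ¬ j = 1)]
      have e2 : trot d u (j + 1) = u j := by
        simp only [trot, if_neg (by omega : ¬ j + 1 = 1), Nat.add_sub_cancel]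
      rw [e1, e2] at hjne
      refine Finset.mem_insert_of_mem ?_
      simp only [hS, Finset.mem_image]
      refine ⟨j - 1, ?_, by omega⟩
      simp only [sw, Finset.mem_filter, Finset.mem_Ico]
      refine ⟨⟨by omega, by omega⟩, ?_⟩
      have : j - 1 + 1 = j := by omega
      rw [this]; exact hjne
  have hcardS : S.card ≤ (sw d u).card := by
    calc S.card ≤ (sw (d - 1) u).card := Finset.card_image_le
      _ ≤ (sw d u).card := Finset.card_le_card (sw_mono (by omega) u)
  rcases Nat.lt_or_ge (sw d u).card i with hlt | hge
  · calc (sw d (trot d u)).card ≤ (insert 1 S).card := Finset.card_le_card hsub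
      _ ≤ S.card + 1 := Finset.card_insert_le _ _
      _ ≤ i := by omega
  · -- card = i, odd
    have heq : (sw d u).card = i := le_antisymm h hge
    have hodd : Odd (sw d u).card := heq ▸ hi
    have hne : u 1 ≠ u d := by
      intro h'
      exact (Nat.not_even_iff_odd.mpr hodd) (((sw_parity u d hd).mpr h'))
    have h1not : 1 ∉ sw d (trot d u) := by
      simp only [sw, Finset.mem_filter, Finset.mem_Ico, not_and]
      intro hlt1
      have e1 : trot d u 1 = !(u d) := by simp [trot]
      have e2 : trot d u 2 = u 1 := by simp [trot]
      rw [e1, e2]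
      cases hu1 : u 1 <;> cases hud : u d <;> simp_all
    have hsub' : sw d (trot d u) ⊆ S := by
      intro j hj
      rcases Finset.mem_insert.mp (hsub hj) with h' | h'
      · exact absurd (h' ▸ hj) h1not
      · exact h'
    calc (sw d (trot d u)).card ≤ S.card := Finset.card_le_card hsub'
      _ ≤ i := by omega
end

section
/- For 1 ≤ i ≤ d-1, the intersection of the links of x_d and y_d in B(i,d) equals B(i-1, d-1), viewed as a complex on vertices {x_1,...,x_{d-1},y_1,...,y_{d-1}}. -/
/-- The facet of the boundary of the `d`-cross-polytope corresponding to the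
word `u`. -/
def facetOf (d : ℕ) (u : ℕ → Bool) : Finset (ℕ × Bool) :=
  (Finset.Icc 1 d).image (fun j => (j, u j))

lemma mem_facetOf {d : ℕ} {u : ℕ → Bool} {j : ℕ} {b : Bool} :
    (j, b) ∈ facetOf d u ↔ 1 ≤ j ∧ j ≤ d ∧ u j = b := by
  simp only [facetOf, Finset.mem_image, Finset.mem_Icc, Prod.mk.injEq]
  constructor
  · rintro ⟨a, ⟨h1, h2⟩, rfl, rfl⟩; exact ⟨h1, h2, rfl⟩
  · rintro ⟨h1, h2, rfl⟩; exact ⟨j, ⟨h1, h2⟩, rfl, rfl⟩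

lemma mem_sw {d : ℕ} {u : ℕ → Bool} {j : ℕ} :
    j ∈ sw d u ↔ 1 ≤ j ∧ j < d ∧ u j ≠ u (j + 1) := by
  simp [sw, Finset.mem_filter, Finset.mem_Ico, and_assoc]

lemma exists_switch (u : ℕ → Bool) :
    ∀ e m, m ≤ e → u m ≠ u e → ∃ j, m ≤ j ∧ j < e ∧ u j ≠ u (j + 1) := by
  intro e
  induction e with
  | zero =>
    intro m hm hne
    interval_cases m
    exact absurd rfl hne
  | succ e ih =>
    intro m hm hne
    rcases Nat.lt_succ_iff_lt_or_eq.mp (Nat.lt_succ_of_le hm) with h | rfl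
    · by_cases hme : u m = u e
      · exact ⟨e, by omega, Nat.lt_succ_self e, fun hh => hne (hme.trans hh)⟩
      · obtain ⟨j, h1, h2, h3⟩ := ih m (by omega) hme
        exact ⟨j, h1, by omega, h3⟩
    · exact absurd rfl hne

lemma cut (e i m : ℕ) (u : ℕ → Bool) (hm1 : 1 ≤ m) (hm : m < e)
    (hc : (sw e u).card ≤ i) (hne : u m ≠ u e) :
    ∃ w : ℕ → Bool, (sw e w).card ≤ i - 1 ∧ ∀ j ≤ m, w j = u j := by
  obtain ⟨j₀, hj1, hj2, hj3⟩ := exists_switch u e m hm.le hne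
  set w : ℕ → Bool := fun j => if j ≤ m then u j else u m with hw
  refine ⟨w, ?_, fun j hj => if_pos hj⟩
  have hj₀mem : j₀ ∈ sw e u := mem_sw.mpr ⟨by omega, hj2, hj3⟩
  have hsub : sw e w ⊆ (sw e u).erase j₀ := by
    intro j hj
    rw [mem_sw] at hj
    obtain ⟨h1, h2, h3⟩ := hj
    have hjm : j < m := by
      by_contra hge
      push_neg at hge
      have e1 : w j = u m := by
        by_cases h : j ≤ m
        · have hjm' : j = m := le_antisymm h hge
          simp [hw, hjm']
        · simp only [hw, if_neg h]
      have e2 : w (j + 1) = u m := by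
        have h : ¬ (j + 1 ≤ m) := by omega
        simp only [hw, if_neg h]
      exact h3 (e1.trans e2.symm)
    rw [Finset.mem_erase, mem_sw]
    refine ⟨by omega, h1, h2, ?_⟩
    have e1 : w j = u j := if_pos hjm.le
    have e2 : w (j + 1) = u (j + 1) := if_pos (by omega)
    rwa [e1, e2] at h3
  calc (sw e w).card ≤ ((sw e u).erase j₀).card := Finset.card_le_card hsub
    _ = (sw e u).card - 1 := Finset.card_erase_of_mem hj₀mem
    _ ≤ i - 1 := Nat.sub_le_sub_right hc 1

lemma both (d i : ℕ) (σ : Finset (ℕ × Bool))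
    (u v : ℕ → Bool) (hσu : σ ⊆ facetOf (d - 1) u) (hσv : σ ⊆ facetOf (d - 1) v)
    (hcu : (sw (d - 1) u).card ≤ i) (hcv : (sw (d - 1) v).card ≤ i)
    (hne : u (d - 1) ≠ v (d - 1)) :
    ∃ w, (sw (d - 1) w).card ≤ i - 1 ∧ σ ⊆ facetOf (d - 1) w := by
  by_cases hσ : σ = ∅
  · refine ⟨fun _ => true, ?_, by simp [hσ]⟩
    have : sw (d - 1) (fun _ => true) = ∅ := by
      ext j; simp [mem_sw]
    simp [this]
  · obtain ⟨p, hp, hmax⟩ := Finset.exists_max_image σ Prod.fst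
      (Finset.nonempty_of_ne_empty hσ)
    obtain ⟨m, b⟩ := p
    have hu := mem_facetOf.mp (hσu hp)
    have hv := mem_facetOf.mp (hσv hp)
    obtain ⟨hm1, hm2, hum⟩ := hu
    obtain ⟨_, _, hvm⟩ := hv
    have huv : u m = v m := hum.trans hvm.symm
    have hmne : m ≠ d - 1 := fun h => hne (h ▸ huv)
    have hmlt : m < d - 1 := lt_of_le_of_ne hm2 hmne
    by_cases hcase : u m = u (d - 1)
    · -- then v m ≠ v (d-1)
      have hvne : v m ≠ v (d - 1) := by
        intro h
        exact hne (hcase.symm.trans (huv.trans h))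
      obtain ⟨w, hwc, hwa⟩ := cut (d - 1) i m v hm1 hmlt hcv hvne
      refine ⟨w, hwc, ?_⟩
      intro q hq
      obtain ⟨j, c⟩ := q
      have h1 := mem_facetOf.mp (hσv hq)
      have hjm : j ≤ m := hmax (j, c) hq
      exact mem_facetOf.mpr ⟨h1.1, h1.2.1, (hwa j hjm).trans h1.2.2⟩
    · obtain ⟨w, hwc, hwa⟩ := cut (d - 1) i m u hm1 hmlt hcu hcase
      refine ⟨w, hwc, ?_⟩
      intro q hq
      obtain ⟨j, c⟩ := q
      have h1 := mem_facetOf.mp (hσu hq)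
      have hjm : j ≤ m := hmax (j, c) hq
      exact mem_facetOf.mpr ⟨h1.1, h1.2.1, (hwa j hjm).trans h1.2.2⟩

lemma extend (d i : ℕ) (hd : 2 ≤ d) (hi1 : 1 ≤ i) (c : Bool) (σ : Finset (ℕ × Bool))
    (w : ℕ → Bool) (hcw : (sw (d - 1) w).card ≤ i - 1) (hw : σ ⊆ facetOf (d - 1) w) :
    ∃ u, (sw d u).card ≤ i ∧ insert (d, c) σ ⊆ facetOf d u := by
  set u : ℕ → Bool := fun j => if j < d then w j else c with hu
  refine ⟨u, ?_, ?_⟩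
  · have hsub : sw d u ⊆ insert (d - 1) (sw (d - 1) w) := by
      intro j hj
      rw [mem_sw] at hj
      obtain ⟨h1, h2, h3⟩ := hj
      rw [Finset.mem_insert, mem_sw]
      by_cases hje : j = d - 1
      · exact Or.inl hje
      · refine Or.inr ⟨h1, by omega, ?_⟩
        have e1 : u j = w j := if_pos (by omega)
        have e2 : u (j + 1) = w (j + 1) := if_pos (by omega)
        rwa [e1, e2] at h3
    calc (sw d u).card ≤ (insert (d - 1) (sw (d - 1) w)).card :=
          Finset.card_le_card hsub
      _ ≤ (sw (d - 1) w).card + 1 := Finset.card_insert_le _ _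
      _ ≤ (i - 1) + 1 := by omega
      _ = i := by omega
  · intro p hp
    rw [Finset.mem_insert] at hp
    rcases hp with rfl | hp
    · exact mem_facetOf.mpr ⟨by omega, le_refl d, if_neg (lt_irrefl d)⟩
    · obtain ⟨j, b⟩ := p
      obtain ⟨h1, h2, h3⟩ := mem_facetOf.mp (hw hp)
      have e4 : u j = w j := if_pos (show j < d by omega)
      exact mem_facetOf.mpr ⟨h1, by omega, e4.trans h3⟩

/-- For `1 ≤ i ≤ d-1`, the intersection of the links of `x_d = (d, true)` and
`y_d = (d, false)` in `B(i,d)` equals `B(i-1, d-1)` (on the vertices with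
positions `1,...,d-1`): a set `σ` lies in both links iff it is a face of
`B(i-1, d-1)`. -/
theorem stmt17 (d i : ℕ) (hi1 : 1 ≤ i) (hi : i ≤ d - 1)
    (σ : Finset (ℕ × Bool)) :
    ((∃ u : ℕ → Bool, (sw d u).card ≤ i ∧
        insert (d, true) σ ⊆ facetOf d u) ∧
     (∃ u : ℕ → Bool, (sw d u).card ≤ i ∧
        insert (d, false) σ ⊆ facetOf d u)) ↔
      ∃ u : ℕ → Bool, (sw (d - 1) u).card ≤ i - 1 ∧ σ ⊆ facetOf (d - 1) u := by
  have hd : 2 ≤ d := by omega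
  constructor
  · rintro ⟨⟨u, hcu, hu⟩, ⟨v, hcv, hv⟩⟩
    have hud : u d = true :=
      (mem_facetOf.mp (hu (Finset.mem_insert_self _ _))).2.2
    have hvd : v d = false :=
      (mem_facetOf.mp (hv (Finset.mem_insert_self _ _))).2.2
    -- σ is contained in both restricted facets
    have hσd : ∀ p ∈ σ, p.1 ≤ d - 1 ∧ u p.1 = p.2 ∧ v p.1 = p.2 ∧ 1 ≤ p.1 := by
      intro p hp
      obtain ⟨j, b⟩ := p
      obtain ⟨h1, h2, h3⟩ := mem_facetOf.mp (hu (Finset.mem_insert_of_mem hp))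
      obtain ⟨_, _, h3'⟩ := mem_facetOf.mp (hv (Finset.mem_insert_of_mem hp))
      have hjd : j ≠ d := by
        rintro rfl
        rw [hud] at h3; rw [hvd] at h3'
        rw [← h3] at h3'
        exact Bool.false_ne_true h3'
      exact ⟨by omega, h3, h3', h1⟩
    have hσu : σ ⊆ facetOf (d - 1) u := by
      intro p hp
      obtain ⟨j, b⟩ := p
      obtain ⟨h1, h2, _, h4⟩ := hσd (j, b) hp
      exact mem_facetOf.mpr ⟨h4, h1, h2⟩
    have hσv : σ ⊆ facetOf (d - 1) v := by
      intro p hp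
      obtain ⟨j, b⟩ := p
      obtain ⟨h1, _, h3, h4⟩ := hσd (j, b) hp
      exact mem_facetOf.mpr ⟨h4, h1, h3⟩
    have hswu : sw (d - 1) u ⊆ sw d u := by
      intro j hj; rw [mem_sw] at *; exact ⟨hj.1, by omega, hj.2.2⟩
    have hswv : sw (d - 1) v ⊆ sw d v := by
      intro j hj; rw [mem_sw] at *; exact ⟨hj.1, by omega, hj.2.2⟩
    by_cases hA : u (d - 1) = u d
    · by_cases hB : v (d - 1) = v d
      · -- middle case: u (d-1) = true ≠ false = v (d-1)
        have hne : u (d - 1) ≠ v (d - 1) := by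
          rw [hA, hB, hud, hvd]; decide
        exact both d i σ u v hσu hσv (le_trans (Finset.card_le_card hswu) hcu)
          (le_trans (Finset.card_le_card hswv) hcv) hne
      · -- v has a switch at d-1
        have hmem : d - 1 ∈ sw d v := mem_sw.mpr ⟨by omega, by omega,
          by rw [show d - 1 + 1 = d by omega]; exact hB⟩
        have hsub : sw (d - 1) v ⊆ (sw d v).erase (d - 1) := by
          intro j hj
          have hj' := mem_sw.mp hj
          exact Finset.mem_erase.mpr ⟨by omega, hswv hj⟩
        refine ⟨v, ?_, hσv⟩
        calc (sw (d - 1) v).card ≤ ((sw d v).erase (d - 1)).card :=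
              Finset.card_le_card hsub
          _ = (sw d v).card - 1 := Finset.card_erase_of_mem hmem
          _ ≤ i - 1 := Nat.sub_le_sub_right hcv 1
    · -- u has a switch at d-1
      have hmem : d - 1 ∈ sw d u := mem_sw.mpr ⟨by omega, by omega,
        by rw [show d - 1 + 1 = d by omega]; exact hA⟩
      have hsub : sw (d - 1) u ⊆ (sw d u).erase (d - 1) := by
        intro j hj
        have hj' := mem_sw.mp hj
        exact Finset.mem_erase.mpr ⟨by omega, hswu hj⟩
      refine ⟨u, ?_, hσu⟩
      calc (sw (d - 1) u).card ≤ ((sw d u).erase (d - 1)).card :=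
            Finset.card_le_card hsub
        _ = (sw d u).card - 1 := Finset.card_erase_of_mem hmem
        _ ≤ i - 1 := Nat.sub_le_sub_right hcu 1
  · rintro ⟨w, hcw, hw⟩
    exact ⟨extend d i hd hi1 true σ w hcw hw, extend d i hd hi1 false σ w hcw hw⟩
end
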